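/- With the coloring c_g as constructed and k ≤ √(g(μ))/2: there is no min-homogeneous subset of the interval [μ, (f_g)_k(μ)) of size k+1 for c_g. -/
import Mathlib


/-- `(f_g)_i`: `(f_g)_1 (n) = n + 1`, `(f_g)_{i+1} (n) = (f_g)_i^(⌊√(g n)/2⌋) (n)`. -/
def fg (g : ℕ → ℕ) : ℕ → ℕ → ℕ
  | 0, n => n
  | 1, n => n + 1
  | (i + 2), n => (fg g (i + 1))^[Nat.sqrt (g n) / 2] n

/-- The semi-metric `(d_g)_i(m,n) = |{l : m < (f_g)_i^(l)(μ) ≤ n}|`. -/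
noncomputable def dg (g : ℕ → ℕ) (μ i m n : ℕ) : ℕ :=
  {l : ℕ | m < (fg g i)^[l] μ ∧ (fg g i)^[l] μ ≤ n}.ncard

/-- `I_g(m,n)`: the greatest `i` with `(d_g)_i(m,n) > 0`. -/
noncomputable def Ig (g : ℕ → ℕ) (μ m n : ℕ) : ℕ := sSup {i | 0 < dg g μ i m n}

/-- `D_g(m,n) = (d_g)_{I_g(m,n)}(m,n)`. -/
noncomputable def Dg (g : ℕ → ℕ) (μ m n : ℕ) : ℕ := dg g μ (Ig g μ m n) m n

/-- The pairing function `Pr(m,n) = C(m+n+1,2) + n`. -/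
def Pr (m n : ℕ) : ℕ := Nat.choose (m + n + 1) 2 + n

/-- The coloring `c_g(m,n) = Pr(I_g(m,n), D_g(m,n))`. -/
noncomputable def cg (g : ℕ → ℕ) (μ m n : ℕ) : ℕ := Pr (Ig g μ m n) (Dg g μ m n)

/-- `H` is min-homogeneous for the pair coloring `c`. -/
def MinHomog (c : ℕ → ℕ → ℕ) (H : Finset ℕ) : Prop :=
  ∀ m n n', m ∈ H → n ∈ H → n' ∈ H → m < n → m < n' → c m n = c m n'

/- ------------------- auxiliary lemmas ------------------- -/

lemma aux_iter_le {f : ℕ → ℕ} (hf : ∀ x, x ≤ f x) (m n : ℕ) : n ≤ f^[m] n := by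
  induction m with
  | zero => simp
  | succ m ih => rw [Function.iterate_succ_apply']; exact le_trans ih (hf _)

lemma aux_fg_le (g : ℕ → ℕ) : ∀ i n, n ≤ fg g i n := by
  intro i
  induction i using Nat.strong_induction_on with
  | _ i ih =>
    match i with
    | 0 => intro n; exact le_rfl
    | 1 => intro n; exact Nat.le_succ n
    | (i+2) => intro n; exact aux_iter_le (ih (i+1) (by omega)) _ n

lemma aux_fg_lt (g : ℕ → ℕ) (μ : ℕ) (h1 : ∀ n, μ ≤ n → 1 ≤ Nat.sqrt (g n) / 2) :
    ∀ i n, μ ≤ n → n < fg g (i+1) n := by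
  intro i
  induction i with
  | zero => intro n _; exact Nat.lt_succ_self n
  | succ i ih =>
    intro n hn
    show n < (fg g (i+1))^[Nat.sqrt (g n) / 2] n
    obtain ⟨t, ht⟩ : ∃ t, Nat.sqrt (g n) / 2 = t + 1 :=
      ⟨Nat.sqrt (g n) / 2 - 1, by have := h1 n hn; omega⟩
    rw [ht, Function.iterate_add_apply (fg g (i+1)) t 1]
    calc n < fg g (i+1) n := ih n hn
      _ = (fg g (i+1))^[1] n := by simp
      _ ≤ (fg g (i+1))^[t] ((fg g (i+1))^[1] n) := aux_iter_le (aux_fg_le g (i+1)) t _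

lemma aux_mu_le_iter (g : ℕ → ℕ) (μ i l : ℕ) : μ ≤ (fg g i)^[l] μ :=
  aux_iter_le (aux_fg_le g i) l μ

lemma aux_iter_strictMono (g : ℕ → ℕ) (μ : ℕ) (h1 : ∀ n, μ ≤ n → 1 ≤ Nat.sqrt (g n) / 2)
    (i : ℕ) : StrictMono (fun l => (fg g (i+1))^[l] μ) := by
  apply strictMono_nat_of_lt_succ
  intro l
  simp only [Function.iterate_succ_apply']
  exact aux_fg_lt g μ h1 i _ (aux_mu_le_iter g μ (i+1) l)

lemma aux_S_finite (g : ℕ → ℕ) (μ : ℕ) (h1 : ∀ n, μ ≤ n → 1 ≤ Nat.sqrt (g n) / 2)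
    {i : ℕ} (hi : 1 ≤ i) (m n : ℕ) :
    {l : ℕ | m < (fg g i)^[l] μ ∧ (fg g i)^[l] μ ≤ n}.Finite := by
  obtain ⟨j, rfl⟩ : ∃ j, i = j + 1 := ⟨i - 1, by omega⟩
  have heq : {l : ℕ | m < (fg g (j+1))^[l] μ ∧ (fg g (j+1))^[l] μ ≤ n}
      = (fun l => (fg g (j+1))^[l] μ) ⁻¹' Set.Ioc m n := rfl
  rw [heq]
  exact (Set.finite_Ioc m n).preimage ((aux_iter_strictMono g μ h1 j).injective.injOn)

lemma aux_dg_pos (g : ℕ → ℕ) (μ : ℕ) (h1 : ∀ n, μ ≤ n → 1 ≤ Nat.sqrt (g n) / 2)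
    {i : ℕ} (hi : 1 ≤ i) (m n : ℕ) :
    0 < dg g μ i m n ↔ ∃ l, m < (fg g i)^[l] μ ∧ (fg g i)^[l] μ ≤ n := by
  rw [dg, Set.ncard_pos (aux_S_finite g μ h1 hi m n)]
  rfl

lemma aux_dg_eq_zero (g : ℕ → ℕ) (μ i m n : ℕ)
    (h : ∀ l, ¬ (m < (fg g i)^[l] μ ∧ (fg g i)^[l] μ ≤ n)) : dg g μ i m n = 0 := by
  have : {l : ℕ | m < (fg g i)^[l] μ ∧ (fg g i)^[l] μ ≤ n} = ∅ :=
    Set.eq_empty_iff_forall_notMem.mpr h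
  rw [dg, this, Set.ncard_empty]

lemma aux_iter_one (g : ℕ → ℕ) (μ : ℕ) (l : ℕ) : (fg g 1)^[l] μ = μ + l := by
  induction l with
  | zero => rfl
  | succ l ih => rw [Function.iterate_succ_apply', ih]; rfl

lemma aux_iter_shift (g : ℕ → ℕ) (μ i : ℕ) :
    ∀ l, ∃ s, (fg g (i+2))^[l] μ = (fg g (i+1))^[s] μ := by
  intro l
  induction l with
  | zero => exact ⟨0, rfl⟩
  | succ l ih =>
    obtain ⟨s, hs⟩ := ih
    refine ⟨Nat.sqrt (g ((fg g (i+1))^[s] μ)) / 2 + s, ?_⟩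
    rw [Function.iterate_succ_apply', hs, Function.iterate_add_apply]
    rfl

lemma aux_iter_level (g : ℕ → ℕ) (μ : ℕ) {j : ℕ} (hj : 1 ≤ j) :
    ∀ i, j ≤ i → ∀ l, ∃ s, (fg g i)^[l] μ = (fg g j)^[s] μ := by
  intro i
  induction i with
  | zero => intro h l; exact absurd (hj.trans h) (by omega)
  | succ i ih =>
    intro hle l
    rcases Nat.lt_or_ge j (i+1) with h | h
    · obtain ⟨t, rfl⟩ : ∃ t, i = t + 1 := ⟨i - 1, by omega⟩
      obtain ⟨s, hs⟩ := aux_iter_shift g μ t l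
      obtain ⟨s', hs'⟩ := ih (by omega) s
      exact ⟨s', by rw [hs, hs']⟩
    · have : j = i + 1 := by omega
      subst this; exact ⟨l, rfl⟩

lemma aux_I_spec (g : ℕ → ℕ) (μ : ℕ) (h1 : ∀ n, μ ≤ n → 1 ≤ Nat.sqrt (g n) / 2)
    {i0 m n : ℕ} (hm : μ ≤ m) (hmn : m < n)
    (h0 : ∀ l, ¬ (m < (fg g (i0+1))^[l] μ ∧ (fg g (i0+1))^[l] μ ≤ n)) :
    1 ≤ Ig g μ m n ∧ Ig g μ m n ≤ i0 := by
  have h1T : 0 < dg g μ 1 m n := by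
    rw [aux_dg_pos g μ h1 le_rfl]
    exact ⟨n - μ, by rw [aux_iter_one]; omega, by rw [aux_iter_one]; omega⟩
  have hub : ∀ i ∈ {i | 0 < dg g μ i m n}, i ≤ i0 := by
    intro i hi
    by_contra hgt
    push_neg at hgt
    have hzero : dg g μ i m n = 0 := by
      apply aux_dg_eq_zero
      intro l hl
      obtain ⟨s, hs⟩ := aux_iter_level g μ (show 1 ≤ i0+1 by omega) i (by omega) l
      rw [hs] at hl
      exact h0 s hl
    simp only [Set.mem_setOf_eq, hzero] at hi
    omega
  have hbdd : BddAbove {i | 0 < dg g μ i m n} := ⟨i0, hub⟩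
  exact ⟨le_csSup hbdd h1T, hub _ (Nat.sSup_mem ⟨1, h1T⟩ hbdd)⟩

lemma aux_Pr_mono {m n m' n' : ℕ} (h : m + n < m' + n') : Pr m n < Pr m' n' := by
  have h2 : Nat.choose (m+n+2) 2 = (m+n+1) + Nat.choose (m+n+1) 2 := by
    rw [Nat.choose_succ_succ (m+n+1) 1, Nat.choose_one_right]
  have h3 : Nat.choose (m+n+2) 2 ≤ Nat.choose (m'+n'+1) 2 :=
    Nat.choose_le_choose 2 (by omega)
  unfold Pr
  omega

lemma aux_Pr_inj {m n m' n' : ℕ} (h : Pr m n = Pr m' n') : m = m' ∧ n = n' := by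
  have hs : m + n = m' + n' := by
    rcases lt_trichotomy (m+n) (m'+n') with hlt | he | hgt
    · exact absurd h (aux_Pr_mono hlt).ne
    · exact he
    · exact absurd h.symm (aux_Pr_mono hgt).ne
  unfold Pr at h
  rw [hs] at h
  have hn : n = n' := Nat.add_left_cancel h
  omega

lemma aux_key (g : ℕ → ℕ) (μ : ℕ) (h1 : ∀ n, μ ≤ n → 1 ≤ Nat.sqrt (g n) / 2) :
    ∀ i, 1 ≤ i → ∀ x : ℕ → ℕ, μ ≤ x 0 →
      (∀ a b, a < b → b ≤ i → x a < x b) →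
      (∀ l, ¬ (x 0 < (fg g i)^[l] μ ∧ (fg g i)^[l] μ ≤ x i)) →
      ¬ (∀ a b c, b ≤ i → c ≤ i → a < b → a < c →
          cg g μ (x a) (x b) = cg g μ (x a) (x c)) := by
  intro i hi
  induction i, hi using Nat.le_induction with
  | base =>
    intro x hx0 hchain h0 _
    have hx1 : x 0 < x 1 := hchain 0 1 Nat.one_pos le_rfl
    have heq : (fg g 1)^[x 1 - μ] μ = x 1 := by rw [aux_iter_one]; omega
    exact h0 (x 1 - μ) (by rw [heq]; exact ⟨hx1, le_rfl⟩)
  | succ i hi ih =>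
    intro x hx0 hchain h0 hMH
    have hx01 : x 0 < x 1 := hchain 0 1 Nat.one_pos (by omega)
    have hx1n : x 1 < x (i+1) := hchain 1 (i+1) (by omega) le_rfl
    have hx0n : x 0 < x (i+1) := hchain 0 (i+1) (by omega) le_rfl
    obtain ⟨hj1, hj2⟩ := aux_I_spec g μ h1 hx0 hx0n h0
    have hc : cg g μ (x 0) (x 1) = cg g μ (x 0) (x (i+1)) :=
      hMH 0 1 (i+1) (by omega) le_rfl Nat.one_pos (by omega)
    unfold cg at hc
    obtain ⟨hIeq, hDeq⟩ := aux_Pr_inj hc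
    unfold Dg at hDeq
    rw [hIeq] at hDeq
    set j := Ig g μ (x 0) (x (i+1)) with hjdef
    unfold dg at hDeq
    have hS1S2 : {l : ℕ | x 0 < (fg g j)^[l] μ ∧ (fg g j)^[l] μ ≤ x 1}
        ⊆ {l : ℕ | x 0 < (fg g j)^[l] μ ∧ (fg g j)^[l] μ ≤ x (i+1)} :=
      fun l hl => ⟨hl.1, hl.2.trans hx1n.le⟩
    have hSeq := Set.eq_of_subset_of_ncard_le hS1S2 (le_of_eq hDeq.symm)
      (aux_S_finite g μ h1 hj1 (x 0) (x (i+1)))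
    have h0'' : ∀ l, ¬ (x 1 < (fg g j)^[l] μ ∧ (fg g j)^[l] μ ≤ x (i+1)) := by
      intro l hl
      have hl2 : l ∈ {l : ℕ | x 0 < (fg g j)^[l] μ ∧ (fg g j)^[l] μ ≤ x (i+1)} :=
        ⟨hx01.trans hl.1, hl.2⟩
      rw [← hSeq] at hl2
      exact absurd hl2.2 (not_le.mpr hl.1)
    have h0i : ∀ l, ¬ (x 1 < (fg g i)^[l] μ ∧ (fg g i)^[l] μ ≤ x (i+1)) := by
      intro l hl
      obtain ⟨s, hs⟩ := aux_iter_level g μ hj1 i (by omega) l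
      rw [hs] at hl
      exact h0'' s hl
    exact ih (fun n => x (n+1)) (hx0.trans hx01.le)
      (fun a b hab hb => hchain (a+1) (b+1) (by omega) (by omega))
      h0i
      (fun a b c hb hc hab hac =>
        hMH (a+1) (b+1) (c+1) (by omega) (by omega) (by omega) (by omega))

theorem stmt15 (g : ℕ → ℕ) (hg : Monotone g) (k μ : ℕ) (hk : 2 < k)
    (hμ : k ≤ Nat.sqrt (g μ) / 2) (hμmin : ∀ t, k ≤ Nat.sqrt (g t) / 2 → μ ≤ t) :
    ¬ ∃ H : Finset ℕ, (∀ x ∈ H, μ ≤ x ∧ x < fg g k μ) ∧ H.card = k + 1 ∧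
        MinHomog (cg g μ) H := by
  rintro ⟨H, hmemH, hcard, hmh⟩
  have h1 : ∀ n, μ ≤ n → 1 ≤ Nat.sqrt (g n) / 2 := by
    intro n hn
    have h2 : Nat.sqrt (g μ) ≤ Nat.sqrt (g n) := Nat.sqrt_le_sqrt (hg hn)
    have h3 : Nat.sqrt (g μ) / 2 ≤ Nat.sqrt (g n) / 2 := Nat.div_le_div_right h2
    omega
  set e := H.orderEmbOfFin hcard with he
  set x : ℕ → ℕ := fun n => e ⟨min n k, by omega⟩ with hx
  have hxmem : ∀ n, x n ∈ H := fun n => H.orderEmbOfFin_mem hcard _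
  have hchain : ∀ a b, a < b → b ≤ k → x a < x b := by
    intro a b hab hb
    have hlt : (⟨min a k, by omega⟩ : Fin (k+1)) < ⟨min b k, by omega⟩ := by
      rw [Fin.mk_lt_mk]; omega
    exact e.lt_iff_lt.mpr hlt
  have h0 : ∀ l, ¬ (x 0 < (fg g k)^[l] μ ∧ (fg g k)^[l] μ ≤ x k) := by
    intro l hl
    match l with
    | 0 =>
      rw [Function.iterate_zero_apply] at hl
      have := (hmemH _ (hxmem 0)).1
      omega
    | (t+1) =>
      obtain ⟨hl1, hl2⟩ := hl
      have h2 : fg g k μ ≤ (fg g k)^[t+1] μ := by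
        rw [Function.iterate_succ_apply]
        exact aux_iter_le (aux_fg_le g k) t (fg g k μ)
      have h3 : x k < fg g k μ := (hmemH _ (hxmem k)).2
      omega
  exact aux_key g μ h1 k (by omega) x ((hmemH _ (hxmem 0)).1) hchain h0
    (fun a b c hb hc hab hac =>
      hmh (x a) (x b) (x c) (hxmem a) (hxmem b) (hxmem c) (hchain a b hab hb) (hchain a c hac hc))
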